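/- Fix $0<\lambda\leq\Lambda$, set $Q=10$ and $\beta = \frac{\Lambda}{\lambda}(Q-1)+1$, and let $\rho$ be the H-type gauge on $\mathbb{R}^7$. Then the function $\varphi_2(\rho) = \rho^{2-\beta}$ is a classical solution of $\mathcal{M}^+_{\lambda,\Lambda}((D^2_{\mathbb{H}}u)^*) = 0$ on $\mathbb{R}^7\setminus\{0\}$, i.e. at every point with $\rho\neq 0$ one has $-\lambda\, \varphi_2''(\rho)\,|D_{\mathbb{H}}\rho|^2 - \Lambda(Q-1)\frac{\varphi_2'(\rho)}{\rho}|D_{\mathbb{H}}\rho|^2 = 0$ (using that $\varphi_2$ is convex and decreasing). -/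

import Mathlib

/-!
For `φ(r) = r ^ a` one has `φ''(r) = (a - 1) φ'(r) / r`, so the radial Pucci expression
`-λ φ'' - Λ (Q - 1) φ' / r` equals `-(λ (a - 1) + Λ (Q - 1)) φ' / r`; the exponent `a = 2 - β`
is exactly the root of `λ (a - 1) + Λ (Q - 1) = 0`.
-/

noncomputable section

/-- `|x_H|² = x₁²+x₂²+x₃²+x₄²` on `ℝ⁷` with coordinates `(x₁,x₂,x₃,x₄,t₁,t₂,t₃)`. -/
def xH2 (p : Fin 7 → ℝ) : ℝ := p 0 ^ 2 + p 1 ^ 2 + p 2 ^ 2 + p 3 ^ 2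

/-- H-type gauge `ρ = (|x_H|⁴ + t₁²+t₂²+t₃²)^{1/4}` on `ℝ⁷`. -/
def rhoH (p : Fin 7 → ℝ) : ℝ := (xH2 p ^ 2 + p 4 ^ 2 + p 5 ^ 2 + p 6 ^ 2) ^ (1/4 : ℝ)

lemma Real.deriv_deriv_rpow_const (a x : ℝ) :
    deriv (deriv fun x : ℝ => x ^ a) x = a * (a - 1) * x ^ (a - 2) := by
  simpa [descPochhammer_succ_right, sub_sub, one_add_one_eq_two] using
    Real.iter_deriv_rpow_const a x 2

lemma Real.rpow_radial_pucci_eq_zero {lam Lam k a r : ℝ} (hr : r ≠ 0)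
    (ha : lam * (a - 1) + Lam * k = 0) :
    -lam * deriv (deriv fun x : ℝ => x ^ a) r
      - Lam * k * (deriv (fun x : ℝ => x ^ a) r / r) = 0 := by
  rw [Real.deriv_deriv_rpow_const, Real.deriv_rpow_const,
    show a - 2 = a - 1 - 1 by ring, Real.rpow_sub_one hr]
  linear_combination (-a * r ^ (a - 1) / r) * ha

theorem stmt5_general (lam Lam : ℝ) (h0 : 0 < lam)
    (β : ℝ) (hβ : β = Lam / lam * (10 - 1) + 1)
    (φ : ℝ → ℝ) (hφ : φ = fun r : ℝ => r ^ ((2 : ℝ) - β)) :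
    ∀ p : Fin 7 → ℝ, rhoH p ≠ 0 →
      -lam * deriv (deriv φ) (rhoH p) * (xH2 p / rhoH p ^ 2)
        - Lam * (10 - 1) * (deriv φ (rhoH p) / rhoH p) * (xH2 p / rhoH p ^ 2) = 0 := by
  intro p hp
  have hexponent : lam * ((2 - β) - 1) + Lam * (10 - 1) = 0 := by
    rw [hβ]
    field_simp
    ring
  subst hφ
  linear_combination (xH2 p / rhoH p ^ 2) * Real.rpow_radial_pucci_eq_zero hp hexponent

/-- with `0 < λ ≤ Λ`, `Q = 10`, `β = (Λ/λ)(Q-1)+1`, the function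
`φ₂(ρ) = ρ^{2-β}` (convex and decreasing) solves the Pucci maximal equation
`𝓜⁺_{λ,Λ}((D²_ℍ u)*) = 0` on `ℝ⁷ \ {0}`, i.e. at every point with `ρ ≠ 0`,
`-λ φ₂''(ρ)|D_ℍρ|² - Λ(Q-1)(φ₂'(ρ)/ρ)|D_ℍρ|² = 0`, where `|D_ℍρ|² = |x_H|²/ρ²`. -/
theorem stmt5 (lam Lam : ℝ) (h0 : 0 < lam) (h1 : lam ≤ Lam)
    (β : ℝ) (hβ : β = Lam / lam * (10 - 1) + 1)
    (φ : ℝ → ℝ) (hφ : φ = fun r : ℝ => r ^ ((2 : ℝ) - β)) :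
    ∀ p : Fin 7 → ℝ, rhoH p ≠ 0 →
      -lam * deriv (deriv φ) (rhoH p) * (xH2 p / rhoH p ^ 2)
        - Lam * (10 - 1) * (deriv φ (rhoH p) / rhoH p) * (xH2 p / rhoH p ^ 2) = 0 :=
  stmt5_general lam Lam h0 β hβ φ hφ
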